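/- arXiv:1309.0088 — 2 statements merged into one kernel-verified Lean document; each statement's English description precedes it below -/
import Mathlib

section
/- Fix α ≥ 2, 0 ≤ k ≤ 1, β > 0, and a sufficiently small ε > 0, and let μ = α/(α−1). For each n, let γ_1*, …, γ_n* be i.i.d. random variables each distributed as the maximum of m = n^k i.i.d. Pareto(α) random variables, let t = n^{(k+1)/(α+1)−ε}, r = n − t + 1, and let γ*_(r) denote the r-th smallest (equivalently, the t-th largest) value among γ_1*, …, γ_n*. Then liminf_{n→∞} Pr{ γ*_(r) ≥ 2βμt } ≥ 1/2; in particular, for all sufficiently large n, Pr{ γ*_(r) ≥ 2βμt } ≥ 1/2 − δ for any fixed δ > 0. -/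
/-!
If `γ*_(r) < x`, some `r = n - t + 1` of the `γ_i*` lie below `x`; by independence and a union
bound over `r`-subsets this has probability at most
`C(n, t - 1) F(x)^r ≤ exp ((t - 1) log n - m r x^(-α))`.
With `e = (k + 1)/(α + 1) - ε ∈ (0, 1)`, `t ≈ n^e`, `x = 2βμt ≍ n^e` and `r ≥ n / 2`, the term
`m r x^(-α)` is of order `n^(k + 1 - eα) = n^(e + (α + 1)ε)`, which beats `t log n ≈ n^e log n`.
So `Pr{γ*_(r) ≥ 2βμt} → 1`.
-/

open MeasureTheory ProbabilityTheory Filter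

/-- The `r`-th smallest value (1-indexed) among `g 0, …, g (n-1)`:
the order statistic of the sample `g`. -/
noncomputable def orderStat {n : ℕ} (g : Fin n → ℝ) (r : ℕ) : ℝ :=
  ((List.ofFn g).insertionSort (· ≤ ·)).getD (r - 1) 0

/-- Cache size `m = n ^ k` (rounded up to an integer). -/
noncomputable def cacheSize (k : ℝ) (n : ℕ) : ℕ := ⌈(n : ℝ) ^ k⌉₊

/-- Number of activated pairs `t = n ^ ((k+1)/(α+1) - ε)` (rounded up to an integer). -/
noncomputable def numActive (α k ε : ℝ) (n : ℕ) : ℕ :=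
  ⌈(n : ℝ) ^ ((k + 1) / (α + 1) - ε)⌉₊

open Topology Real Finset
open scoped ENNReal

lemma le_card_filter_lt_of_orderStat_lt {n r : ℕ} {g : Fin n → ℝ} {x : ℝ} (hr0 : 0 < r)
    (hrn : r ≤ n) (h : orderStat g r < x) : r ≤ #{i | g i < x} := by
  set l := (List.ofFn g).insertionSort (· ≤ ·)
  have hperm : l.Perm (List.ofFn g) := List.perm_insertionSort _ _
  have hsorted : l.Pairwise (· ≤ ·) := List.pairwise_insertionSort _ _
  have hlen : l.length = n := by rw [hperm.length_eq, List.length_ofFn]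
  have hstat : orderStat g r = l[r - 1] := List.getD_eq_getElem _ _ _
  have htake : ∀ y ∈ l.take r, y < x := by
    intro y hy
    obtain ⟨i, hi, rfl⟩ := List.mem_take_iff_getElem.1 hy
    refine lt_of_le_of_lt ?_ (hstat ▸ h)
    exact hsorted.rel_get_of_le (a := ⟨i, by omega⟩) (b := ⟨r - 1, by omega⟩)
      (Fin.mk_le_mk.2 (by omega))
  calc r = (l.take r).countP (· < x) := by
        rw [List.countP_eq_length.2 (by simpa using htake), List.length_take]; omega
    _ ≤ l.countP (· < x) := (List.take_sublist _ _).countP_le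
    _ = (List.ofFn g).countP (· < x) := hperm.countP_eq _
    _ = #{i | g i < x} := by
        rw [List.ofFn_eq_map, List.countP_map, List.countP_eq_length_filter]
        rfl

lemma measure_orderStat_lt_le {Ω : Type*} [MeasurableSpace Ω] {P : Measure Ω} {n r : ℕ}
    {X : Fin n → Ω → ℝ} (hX : iIndepFun X P) (hr0 : 0 < r) (hrn : r ≤ n) {x : ℝ} {p : ℝ≥0∞}
    (hp : ∀ i, P {ω | X i ω < x} ≤ p) :
    P {ω | orderStat (fun i => X i ω) r < x} ≤ n.choose r * p ^ r := by
  have hcover : {ω | orderStat (fun i => X i ω) r < x} ⊆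
      ⋃ T ∈ (univ : Finset (Fin n)).powersetCard r, ⋂ i ∈ T, X i ⁻¹' Set.Iio x := by
    intro ω hω
    obtain ⟨T, hT, hTcard⟩ :=
      exists_subset_card_eq (le_card_filter_lt_of_orderStat_lt hr0 hrn hω)
    simp only [Set.mem_iUnion, Set.mem_iInter, mem_powersetCard]
    exact ⟨T, ⟨subset_univ T, hTcard⟩, fun i hi => (mem_filter.1 (hT hi)).2⟩
  have hinter : ∀ T ∈ (univ : Finset (Fin n)).powersetCard r,
      P (⋂ i ∈ T, X i ⁻¹' Set.Iio x) ≤ p ^ r := by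
    intro T hT
    rw [hX.meas_biInter fun i _ => ⟨Set.Iio x, measurableSet_Iio, rfl⟩,
      ← (mem_powersetCard.1 hT).2]
    exact prod_le_pow_card _ _ _ fun i _ => hp i
  calc _ ≤ ∑ T ∈ univ.powersetCard r, P (⋂ i ∈ T, X i ⁻¹' Set.Iio x) :=
        (measure_mono hcover).trans (measure_biUnion_finset_le _ _)
    _ ≤ ∑ T ∈ univ.powersetCard r, p ^ r := sum_le_sum hinter
    _ = n.choose r * p ^ r := by simp

lemma one_sub_choose_mul_pow_le_measure_le_orderStat {Ω : Type*} [MeasurableSpace Ω]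
    {P : Measure Ω} [IsProbabilityMeasure P] {n r : ℕ} {X : Fin n → Ω → ℝ}
    (hX : iIndepFun X P) (hr0 : 0 < r) (hrn : r ≤ n) {x p : ℝ} (hp0 : 0 ≤ p)
    (hp : ∀ i, P {ω | X i ω ≤ x} ≤ ENNReal.ofReal p) :
    1 - n.choose r * p ^ r ≤ (P {ω | x ≤ orderStat (fun i => X i ω) r}).toReal := by
  set A := {ω | x ≤ orderStat (fun i => X i ω) r}
  have hcompl : P Aᶜ ≤ ENNReal.ofReal (n.choose r * p ^ r) := by
    have hlt := measure_orderStat_lt_le hX hr0 hrn fun i =>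
      (measure_mono fun ω (hω : X i ω < x) => hω.le).trans (hp i)
    rw [ENNReal.ofReal_mul (by positivity), ENNReal.ofReal_pow hp0, ENNReal.ofReal_natCast]
    have hA : Aᶜ = {ω | orderStat (fun i => X i ω) r < x} := by ext; simp [A]
    rwa [hA]
  -- `A` need not be measurable, so subadditivity replaces `prob_compl_eq_one_sub`.
  have hsplit : 1 ≤ P A + ENNReal.ofReal (n.choose r * p ^ r) :=
    (measure_univ (μ := P) ▸ measure_univ_le_add_compl A).trans (add_le_add le_rfl hcompl)
  have := ENNReal.toReal_mono (by finiteness) hsplit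
  rw [ENNReal.toReal_add (measure_ne_top _ _) ENNReal.ofReal_ne_top,
    ENNReal.toReal_ofReal (by positivity), ENNReal.toReal_one] at this
  linarith

lemma choose_mul_one_sub_pow_le_exp {n t M : ℕ} {q : ℝ} (ht : 1 ≤ t) (htn : t ≤ n)
    (hq : q ≤ 1) :
    (n.choose (n - t + 1) : ℝ) * (1 - q) ^ M ≤ exp (((t : ℝ) - 1) * log n - M * q) := by
  have hn : (0 : ℝ) < n := by exact_mod_cast (by omega : 0 < n)
  have hchoose : (n.choose (n - t + 1) : ℝ) ≤ exp (((t : ℝ) - 1) * log n) := by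
    rw [show n - t + 1 = n - (t - 1) by omega, Nat.choose_symm (by omega)]
    calc (n.choose (t - 1) : ℝ) ≤ (n : ℝ) ^ (t - 1) := mod_cast Nat.choose_le_pow n _
      _ = exp (((t : ℝ) - 1) * log n) := by
        rw [← exp_log hn, ← exp_nat_mul, exp_log hn, Nat.cast_sub ht, Nat.cast_one]
  have hpow : (1 - q) ^ M ≤ exp (-(M * q)) :=
    calc (1 - q) ^ M ≤ exp (-q) ^ M := pow_le_pow_left₀ (by linarith) (one_sub_le_exp_neg q) M
      _ = exp (-(M * q)) := by rw [← exp_nat_mul]; ring_nf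
  calc _ ≤ exp (((t : ℝ) - 1) * log n) * exp (-(M * q)) :=
        mul_le_mul hchoose hpow (pow_nonneg (by linarith) _) (exp_nonneg _)
    _ = _ := by rw [← exp_add]; ring_nf

lemma tendsto_rpow_mul_log_sub_mul_rpow_atBot {a b c : ℝ} (hab : 0 < a + b) (hb : 0 < b)
    (hc : 0 < c) : Tendsto (fun x => x ^ a * log x - c * x ^ (a + b)) atTop atBot := by
  have h := (tendsto_rpow_atTop hab).atTop_mul_neg (by linarith : 0 - c < 0)
    ((isLittleO_log_rpow_atTop hb).tendsto_div_nhds_zero.sub_const c)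
  refine h.congr' ?_
  filter_upwards [eventually_gt_atTop 0] with x hx
  rw [rpow_add hx]
  field_simp

lemma choose_mul_pow_le_exp_of_le_rpow {n t m : ℕ} {s k α b : ℝ} (hs : 0 ≤ s) (hα : 0 ≤ α)
    (ht1 : 1 ≤ t) (h2t : 2 * t ≤ n) (hts : (t : ℝ) ≤ n ^ s + 1) (hbt : 1 ≤ b * t)
    (hm : (n : ℝ) ^ k ≤ m) :
    (n.choose (n - t + 1) : ℝ) * ((1 - (b * t) ^ (-α)) ^ m) ^ (n - t + 1) ≤
      exp (n ^ s * log n - (2 * b) ^ (-α) / 2 * n ^ (k + 1 + s * -α)) := by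
  have hb : 0 < b := by
    have : (1 : ℝ) ≤ t := by exact_mod_cast ht1
    nlinarith
  have hn : (0 : ℝ) < n := by exact_mod_cast (by omega : 0 < n)
  have hns : 1 ≤ (n : ℝ) ^ s := one_le_rpow (by exact_mod_cast (by omega : 1 ≤ n)) hs
  set q := (b * t) ^ (-α)
  have hq : (2 * b) ^ (-α) * (n : ℝ) ^ (s * -α) ≤ q := by
    rw [rpow_mul hn.le, ← mul_rpow (by positivity) (by positivity)]
    exact rpow_le_rpow_of_nonpos (by positivity) (by nlinarith) (by linarith)
  have hN : (n : ℝ) / 2 ≤ (n - t + 1 : ℕ) := by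
    have : (2 * t : ℝ) ≤ n := by exact_mod_cast h2t
    push_cast [Nat.cast_sub (by omega : t ≤ n)]
    linarith
  have hmNq : (2 * b) ^ (-α) / 2 * (n : ℝ) ^ (k + 1 + s * -α) ≤ (m * (n - t + 1) : ℕ) * q :=
    calc (2 * b) ^ (-α) / 2 * (n : ℝ) ^ (k + 1 + s * -α)
        = n ^ k * (n / 2) * ((2 * b) ^ (-α) * n ^ (s * -α)) := by
          rw [rpow_add hn, rpow_add_one hn.ne']
          ring
      _ ≤ (m * (n - t + 1) : ℕ) * q := by
          rw [Nat.cast_mul]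
          gcongr
  calc _ = (n.choose (n - t + 1) : ℝ) * (1 - q) ^ (m * (n - t + 1)) := by rw [pow_mul]
    _ ≤ exp ((t - 1) * log n - (m * (n - t + 1) : ℕ) * q) :=
        choose_mul_one_sub_pow_le_exp ht1 (by omega)
          (rpow_le_one_of_one_le_of_nonpos hbt (by linarith))
    _ ≤ _ := exp_le_exp.2 <|
        sub_le_sub (mul_le_mul_of_nonneg_right (by linarith) (log_natCast_nonneg n)) hmNq

lemma eventually_two_mul_ceil_rpow_le {s : ℝ} (hs : s < 1) :
    ∀ᶠ n : ℕ in atTop, 2 * ⌈(n : ℝ) ^ s⌉₊ ≤ n := by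
  have h : Tendsto (fun x : ℝ => x * (2⁻¹ - x ^ (s - 1) - x⁻¹)) atTop atTop := by
    refine tendsto_id.atTop_mul_pos (C := 2⁻¹) (by norm_num) ?_
    have h1 : Tendsto (fun x : ℝ => x ^ (s - 1)) atTop (𝓝 0) := by
      simpa using tendsto_rpow_neg_atTop (y := 1 - s) (by linarith)
    simpa using (h1.const_sub 2⁻¹).sub tendsto_inv_atTop_zero
  filter_upwards [tendsto_natCast_atTop_atTop.eventually (h.eventually_ge_atTop 0),
    eventually_gt_atTop 0] with n hn hn0
  have hn0' : (0 : ℝ) < n := by exact_mod_cast hn0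
  have hexpand : (n : ℝ) * (2⁻¹ - n ^ (s - 1) - (n : ℝ)⁻¹) = n / 2 - n ^ s - 1 := by
    rw [rpow_sub_one hn0'.ne']
    field_simp
  have hceil := Nat.ceil_lt_add_one (rpow_nonneg n.cast_nonneg s)
  have : (2 * ⌈(n : ℝ) ^ s⌉₊ : ℝ) ≤ n := by rw [hexpand] at hn; linarith
  exact_mod_cast this

lemma eventually_one_le_mul_ceil_rpow {s : ℝ} (hs : 0 < s) {b : ℝ} (hb : 0 < b) :
    ∀ᶠ n : ℕ in atTop, 1 ≤ b * ⌈(n : ℝ) ^ s⌉₊ := by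
  have h := ((tendsto_rpow_atTop hs).comp tendsto_natCast_atTop_atTop).const_mul_atTop hb
  filter_upwards [h.eventually_ge_atTop 1] with n hn
  exact hn.trans (mul_le_mul_of_nonneg_left (Nat.le_ceil _) hb.le)

section NumActive

variable {α k ε : ℝ}

lemma eventually_numActive_bounds (hε1 : ε < (k + 1) / (α + 1))
    (hε2 : (k + 1) / (α + 1) - ε < 1) {b : ℝ} (hb : 0 < b) :
    ∀ᶠ n : ℕ in atTop, 1 ≤ numActive α k ε n ∧ 2 * numActive α k ε n ≤ n ∧
      1 ≤ b * numActive α k ε n := by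
  filter_upwards [eventually_ge_atTop 1, eventually_two_mul_ceil_rpow_le hε2,
    eventually_one_le_mul_ceil_rpow (sub_pos.2 hε1) hb] with n hn h2t hbt
  exact ⟨Nat.one_le_ceil_iff.2 (by positivity), h2t, hbt⟩

lemma tendsto_choose_mul_pow_numActive_zero (hα : 0 ≤ α) (hε0 : 0 < ε)
    (hε1 : ε < (k + 1) / (α + 1)) (hε2 : (k + 1) / (α + 1) - ε < 1) {b : ℝ} (hb : 0 < b) :
    Tendsto (fun n : ℕ => (n.choose (n - numActive α k ε n + 1) : ℝ) *
      ((1 - (b * numActive α k ε n) ^ (-α)) ^ cacheSize k n) ^ (n - numActive α k ε n + 1))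
      atTop (𝓝 0) := by
  set e := (k + 1) / (α + 1) - ε
  have he0 : 0 < e := sub_pos.2 hε1
  have hE : 0 < (α + 1) * ε := by positivity
  have hexp : k + 1 + e * -α = e + (α + 1) * ε := by
    simp only [e]
    field_simp
    ring
  have hL := (tendsto_rpow_mul_log_sub_mul_rpow_atBot (a := e) (by linarith) hE
    (by positivity : 0 < (2 * b) ^ (-α) / 2)).comp
    tendsto_natCast_atTop_atTop
  refine squeeze_zero' ?_ ?_ (tendsto_exp_atBot.comp hL)
  · filter_upwards [eventually_numActive_bounds hε1 hε2 hb] with n ⟨_, _, hbt⟩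
    have := rpow_le_one_of_one_le_of_nonpos hbt (by linarith : -α ≤ 0)
    have : 0 ≤ 1 - (b * numActive α k ε n) ^ (-α) := by linarith
    positivity
  · filter_upwards [eventually_numActive_bounds hε1 hε2 hb] with n ⟨ht1, h2t, hbt⟩
    rw [Function.comp_apply, ← hexp]
    exact choose_mul_pow_le_exp_of_le_rpow he0.le hα ht1 h2t
      (Nat.ceil_lt_add_one (by positivity)).le hbt (Nat.le_ceil _)

end NumActive

theorem weakest_activated_gain_liminf_half_general
    (α k ε β μ : ℝ) (hα : 2 ≤ α) (hk1 : k ≤ 1) (hβ : 0 < β)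
    (hε0 : 0 < ε) (hε1 : ε < (k + 1) / (α + 1))
    (hμ : μ = α / (α - 1))
    (Ω : ℕ → Type*) (mΩ : ∀ n, MeasurableSpace (Ω n)) (P : ∀ n, Measure (Ω n))
    (hP : ∀ n, IsProbabilityMeasure (P n))
    (γ : ∀ n : ℕ, Fin n → Ω n → ℝ)
    (hindep : ∀ n, iIndepFun (γ n) (P n))
    (hcdf : ∀ n, ∀ i : Fin n, ∀ x : ℝ,
      P n {ω | γ n i ω ≤ x} =
        ENNReal.ofReal (if x < 1 then 0 else (1 - x ^ (-α)) ^ (cacheSize k n))) :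
    (1 : ℝ) / 2 ≤
      atTop.liminf (fun n : ℕ =>
        (P n {ω | 2 * β * μ * (numActive α k ε n : ℝ) ≤
            orderStat (fun i : Fin n => γ n i ω) (n - numActive α k ε n + 1)}).toReal) ∧
    ∀ δ : ℝ, 0 < δ → ∀ᶠ n : ℕ in atTop,
      (1 : ℝ) / 2 - δ ≤
        (P n {ω | 2 * β * μ * (numActive α k ε n : ℝ) ≤
            orderStat (fun i : Fin n => γ n i ω) (n - numActive α k ε n + 1)}).toReal := by
  have hb : 0 < 2 * β * μ := by
    have : 0 < α - 1 := by linarith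
    rw [hμ]; positivity
  have hε2 : (k + 1) / (α + 1) - ε < 1 := by
    have : (k + 1) / (α + 1) ≤ 1 := (div_le_one (by linarith)).2 (by linarith)
    linarith
  have hlim : Tendsto (fun n : ℕ => (P n {ω | 2 * β * μ * (numActive α k ε n : ℝ) ≤
      orderStat (fun i : Fin n => γ n i ω) (n - numActive α k ε n + 1)}).toReal) atTop (𝓝 1) := by
    refine tendsto_of_tendsto_of_tendsto_of_le_of_le'
      (by simpa using
        (tendsto_choose_mul_pow_numActive_zero (by linarith) hε0 hε1 hε2 hb).const_sub 1)
      tendsto_const_nhds ?_ (Eventually.of_forall fun n => ?_)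
    · filter_upwards [eventually_numActive_bounds hε1 hε2 hb] with n ⟨ht1, h2t, hx⟩
      have := hP n
      refine one_sub_choose_mul_pow_le_measure_le_orderStat (hindep n) (by omega) (by omega)
        (pow_nonneg (sub_nonneg.2 (rpow_le_one_of_one_le_of_nonpos hx (by linarith))) _)
        fun i => (hcdf n i _).trans_le ?_
      rw [if_neg hx.not_gt]
    · have := hP n
      exact measureReal_le_one
  exact ⟨by rw [hlim.liminf_eq]; norm_num, fun δ hδ => hlim.eventually_const_le (by linarith)⟩

/-- Fix `α ≥ 2`, `0 ≤ k ≤ 1`, `β > 0`, a sufficiently small `ε > 0`, and let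
`μ = α/(α-1)`. For each `n`, let `γ*_1, …, γ*_n` be i.i.d., each distributed as the maximum of
`m = n^k` i.i.d. Pareto(α) random variables (so each has cdf `(1 - x^(-α))^m` for `x ≥ 1`),
let `t = n^((k+1)/(α+1)-ε)`, `r = n - t + 1`, and let `γ*_(r)` be the `r`-th smallest of the
`γ*_i`.  Then `liminf_{n→∞} Pr{γ*_(r) ≥ 2βμt} ≥ 1/2`; in particular for every fixed `δ > 0`
and all sufficiently large `n`, `Pr{γ*_(r) ≥ 2βμt} ≥ 1/2 - δ`. -/
theorem weakest_activated_gain_liminf_half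
    (α k ε β μ : ℝ) (hα : 2 ≤ α) (hk0 : 0 ≤ k) (hk1 : k ≤ 1) (hβ : 0 < β)
    (hε0 : 0 < ε) (hε1 : ε < (k + 1) / (α + 1))
    (hμ : μ = α / (α - 1))
    (Ω : ℕ → Type*) (mΩ : ∀ n, MeasurableSpace (Ω n)) (P : ∀ n, Measure (Ω n))
    (hP : ∀ n, IsProbabilityMeasure (P n))
    (γ : ∀ n : ℕ, Fin n → Ω n → ℝ)
    (hindep : ∀ n, iIndepFun (γ n) (P n))
    (hcdf : ∀ n, ∀ i : Fin n, ∀ x : ℝ,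
      P n {ω | γ n i ω ≤ x} =
        ENNReal.ofReal (if x < 1 then 0 else (1 - x ^ (-α)) ^ (cacheSize k n))) :
    (1 : ℝ) / 2 ≤
      atTop.liminf (fun n : ℕ =>
        (P n {ω | 2 * β * μ * (numActive α k ε n : ℝ) ≤
            orderStat (fun i : Fin n => γ n i ω) (n - numActive α k ε n + 1)}).toReal) ∧
    ∀ δ : ℝ, 0 < δ → ∀ᶠ n : ℕ in atTop,
      (1 : ℝ) / 2 - δ ≤
        (P n {ω | 2 * β * μ * (numActive α k ε n : ℝ) ≤
            orderStat (fun i : Fin n => γ n i ω) (n - numActive α k ε n + 1)}).toReal :=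
  weakest_activated_gain_liminf_half_general α k ε β μ hα hk1 hβ hε0 hε1 hμ Ω mΩ P hP γ hindep hcdf
end

section
/- Fix α ≥ 2, 0 ≤ k ≤ 1, and 0 < ε < (k+1)/(α+1). For each n let m = n^k, t = n^{(k+1)/(α+1)−ε}, and a_n = (1 − (1 − t/n)^{1/m})^{−1/α}. Then a_n / ( n^{(k+1)/(α+1)} · n^{ε/α} ) → 1 as n → ∞; i.e., a_n ∼ n^{(k+1)/(α+1)} n^{ε/α}. -/
/-! With `u = t/n` and `p = 1/m` one has `1 - (1 - u)^p = 1 - exp (p log (1 - u))`. Since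
`u → 0` and `p ≤ 1`, the exponent `p log (1 - u)` tends to `0`, so the first-order expansions of
`exp` at `0` and of `log` at `1` give `1 - (1 - u)^p ~ p u = n^(-k) n^((k+1)/(α+1) - ε - 1)`.
Asymptotic equivalence survives raising to the power `-1/α`, which yields the claimed rate. -/

open Filter

open Topology Asymptotics

theorem HasDerivAt.isEquivalent_sub_nhds {𝕜 F : Type*} [NontriviallyNormedField 𝕜]
    [NormedAddCommGroup F] [NormedSpace 𝕜 F] {f : 𝕜 → F} {f' : F} {x : 𝕜}
    (hf : HasDerivAt f f' x) (hf' : f' ≠ 0) :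
    (fun y ↦ f y - f x) ~[𝓝 x] fun y ↦ (y - x) • f' :=
  (hf.isEquivalent_sub hf').comp_tendsto (tendsto_id.prodMk tendsto_const_pure)

theorem Real.isEquivalent_exp_sub_one : (fun x ↦ Real.exp x - 1) ~[𝓝 0] fun x ↦ x := by
  have h := (Real.hasDerivAt_exp 0).isEquivalent_sub_nhds (by simp)
  simp only [Real.exp_zero, sub_zero, smul_eq_mul, mul_one] at h
  exact h

theorem Real.isEquivalent_log_one_sub : (fun x ↦ Real.log (1 - x)) ~[𝓝 0] fun x ↦ -x := by
  have h : HasDerivAt (fun x ↦ Real.log (1 - x)) (-1) 0 := by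
    simpa using ((hasDerivAt_id (0 : ℝ)).const_sub 1).log (by norm_num)
  simpa using h.isEquivalent_sub_nhds (by norm_num)

theorem isEquivalent_one_sub_one_sub_rpow {ι : Type*} {l : Filter ι} {u p : ι → ℝ}
    (hu : Tendsto u l (𝓝 0)) (hp : IsBoundedUnder (· ≤ ·) l fun i ↦ |p i|) :
    (fun i ↦ 1 - (1 - u i) ^ p i) ~[l] fun i ↦ p i * u i := by
  have hlog : (fun i ↦ Real.log (1 - u i)) ~[l] fun i ↦ -u i :=
    Real.isEquivalent_log_one_sub.comp_tendsto hu
  have hv : Tendsto (fun i ↦ Real.log (1 - u i) * p i) l (𝓝 0) :=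
    (hlog.symm.tendsto_nhds (by simpa using hu.neg)).zero_mul_isBoundedUnder_le hp
  have hexp : (fun i ↦ Real.exp (Real.log (1 - u i) * p i) - 1) ~[l]
      fun i ↦ Real.log (1 - u i) * p i :=
    Real.isEquivalent_exp_sub_one.comp_tendsto hv
  have hpow : (fun i ↦ 1 - (1 - u i) ^ p i) =ᶠ[l]
      fun i ↦ -(Real.exp (Real.log (1 - u i) * p i) - 1) := by
    filter_upwards [hu.eventually_lt_const one_pos] with i hi
    rw [Real.rpow_def_of_pos (by linarith), neg_sub]
  refine (hexp.neg.congr_left hpow.symm).trans ?_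
  simpa [mul_comm] using (hlog.mul (IsEquivalent.refl (u := p))).neg

theorem tendsto_natCast_rpow_div_self {s : ℝ} (hs : s < 1) :
    Tendsto (fun n : ℕ ↦ (n : ℝ) ^ s / n) atTop (𝓝 0) := by
  refine ((tendsto_rpow_neg_atTop (sub_pos.2 hs)).comp tendsto_natCast_atTop_atTop).congr' ?_
  filter_upwards [eventually_gt_atTop 0] with n hn
  rw [Function.comp_apply, neg_sub, Real.rpow_sub_one (by positivity)]

theorem quantile_asymptotics_general
    (α k ε : ℝ) (hα : 2 ≤ α) (hk0 : 0 ≤ k) (hk1 : k ≤ 1)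
    (hε0 : 0 < ε)
    (m t a : ℕ → ℝ)
    (hm : ∀ n : ℕ, m n = (n : ℝ) ^ k)
    (ht : ∀ n : ℕ, t n = (n : ℝ) ^ ((k + 1) / (α + 1) - ε))
    (ha : ∀ n : ℕ, a n = (1 - (1 - t n / n) ^ (1 / m n)) ^ (-(1 / α))) :
    Tendsto (fun n : ℕ => a n / ((n : ℝ) ^ ((k + 1) / (α + 1)) * (n : ℝ) ^ (ε / α)))
      atTop (nhds 1) := by
  have hα0 : 0 < α := by linarith
  have hu : Tendsto (fun n ↦ t n / n) atTop (𝓝 0) := by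
    refine (tendsto_natCast_rpow_div_self ?_).congr fun n ↦ by rw [ht]
    have : (k + 1) / (α + 1) ≤ 1 := (div_le_one (by linarith)).2 (by linarith)
    linarith
  have hp : IsBoundedUnder (· ≤ ·) atTop fun n ↦ |1 / m n| := by
    refine isBoundedUnder_of_eventually_le (a := 1) ?_
    filter_upwards [eventually_ge_atTop 1] with n hn
    have : 1 ≤ m n := hm n ▸ Real.one_le_rpow (by exact_mod_cast hn) hk0
    rw [abs_of_pos (by positivity)]
    exact div_le_one_of_le₀ this (by linarith)
  have hequiv : a ~[atTop] fun n ↦ (1 / m n * (t n / n)) ^ (-(1 / α)) := by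
    refine (funext ha : a = _) ▸ (isEquivalent_one_sub_one_sub_rpow hu hp).rpow fun n ↦ ?_
    simp only [Pi.zero_apply, hm, ht]
    positivity
  have hrate : (fun n : ℕ ↦ (1 / m n * (t n / n)) ^ (-(1 / α))) =ᶠ[atTop]
      fun n ↦ (n : ℝ) ^ ((k + 1) / (α + 1)) * (n : ℝ) ^ (ε / α) := by
    filter_upwards [eventually_gt_atTop 0] with n hn
    have hn : (0 : ℝ) < n := by exact_mod_cast hn
    rw [hm, ht, one_div, ← Real.rpow_neg hn.le, ← Real.rpow_sub_one hn.ne', ← Real.rpow_add hn,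
      ← Real.rpow_mul hn.le, ← Real.rpow_add hn]
    congr 1
    field_simp
    ring
  refine (isEquivalent_iff_tendsto_one ?_).1 (hequiv.congr_right hrate)
  filter_upwards [eventually_gt_atTop 0] with n hn
  positivity

/-- With `m = n^k`, `t = n^((k+1)/(α+1)-ε)` and
`a_n = (1 - (1 - t/n)^(1/m))^(-1/α)`, one has `a_n ∼ n^((k+1)/(α+1)) · n^(ε/α)`. -/
theorem quantile_asymptotics
    (α k ε : ℝ) (hα : 2 ≤ α) (hk0 : 0 ≤ k) (hk1 : k ≤ 1)
    (hε0 : 0 < ε) (hε1 : ε < (k + 1) / (α + 1))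
    (m t a : ℕ → ℝ)
    (hm : ∀ n : ℕ, m n = (n : ℝ) ^ k)
    (ht : ∀ n : ℕ, t n = (n : ℝ) ^ ((k + 1) / (α + 1) - ε))
    (ha : ∀ n : ℕ, a n = (1 - (1 - t n / n) ^ (1 / m n)) ^ (-(1 / α))) :
    Tendsto (fun n : ℕ => a n / ((n : ℝ) ^ ((k + 1) / (α + 1)) * (n : ℝ) ^ (ε / α)))
      atTop (nhds 1) :=
  quantile_asymptotics_general α k ε hα hk0 hk1 hε0 m t a hm ht ha
end
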